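/- arXiv:1005.0602 — 3 statements merged into one kernel-verified Lean document; each statement's English description precedes it below -/
import Mathlib

section
/- Let y = p/q ∈ K(n), written in lowest terms, be any solution of the equation a_0 y + a_1 N y + ⋯ + a_m N^m y = f. Then max{ i ∈ ℕ : gcd(q, N^i q) ≠ 1 } ≤ s, where s := max{ i ∈ ℕ : gcd(N^i a_0, N^{−m} a_m) ≠ 1 } (with the convention max ∅ = −∞). -/
/-!
Write `y = p/q`. If an irreducible `v` divides both `q` and `N^j q`, then `u = N^{-j} v` and
`N^j u` both divide `q`. In characteristic zero only finitely many shifts of `u` divide `q`, so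
there is a maximal chain `w, …, N^d w` of shifts dividing `q`, with `d ≥ j`. Clearing
denominators gives `∑ aᵢ Nⁱp ∏_{k ≠ i} Nᵏq = f ∏ Nᵏq`. The prime `w` divides `q` but neither `p`
nor any `Nᵏq` with `0 < k ≤ m`, so `w ∣ a₀`; symmetrically `N^{m+d} w ∣ a_m`. Hence `N^d w` is a
common factor of `N^d a₀` and `N^{-m} a_m`.
-/

/-- The substitution homomorphism `n ↦ n + i` on `K[n]`. -/
noncomputable def pShiftHom (K : Type*) [Field K] (i : ℤ) :
    Polynomial K →ₐ[K] Polynomial K :=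
  Polynomial.aeval (Polynomial.X + Polynomial.C (i : K))

/-- The shift automorphism `N^i : q(n) ↦ q(n+i)` on `K[n]`. -/
noncomputable def pShift (K : Type*) [Field K] (i : ℤ) :
    Polynomial K ≃ₐ[K] Polynomial K :=
  AlgEquiv.ofAlgHom (pShiftHom K i) (pShiftHom K (-i))
    (by apply Polynomial.algHom_ext; simp [pShiftHom])
    (by apply Polynomial.algHom_ext; simp [pShiftHom])

/-- The shift automorphism `N^i` extended to the field of rational functions `K(n)`. -/
noncomputable def rShift (K : Type*) [Field K] (i : ℤ) : RatFunc K ≃+* RatFunc K :=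
  IsFractionRing.ringEquivOfRingEquiv (pShift K i).toRingEquiv

open scoped Polynomial

section Shift

variable {K : Type*} [Field K]

open Polynomial in
lemma pShift_apply (i : ℤ) (p : K[X]) : pShift K i p = p.comp (X + C (i : K)) := by
  simp [pShift, pShiftHom, aeval_def, comp, algebraMap_eq]

open Polynomial in
lemma pShift_pShift (i j : ℤ) (p : K[X]) : pShift K i (pShift K j p) = pShift K (i + j) p := by
  rw [pShift_apply, pShift_apply, pShift_apply, comp_assoc, add_comp, X_comp, C_comp, Int.cast_add,
    C_add, add_assoc]

@[simp]
lemma pShift_zero (p : K[X]) : pShift K 0 p = p := by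
  simp [pShift_apply]

lemma pShift_dvd_pShift_iff (s t : ℤ) (u q : K[X]) :
    pShift K s u ∣ pShift K t q ↔ pShift K (s - t) u ∣ q := by
  rw [← map_dvd_iff (pShift K (-t)), pShift_pShift, pShift_pShift, neg_add_cancel, pShift_zero,
    neg_add_eq_sub]

lemma irreducible_pShift_iff (i : ℤ) (p : K[X]) : Irreducible (pShift K i p) ↔ Irreducible p :=
  MulEquiv.irreducible_iff (pShift K i).toRingEquiv.toMulEquiv

lemma isUnit_pShift_iff (i : ℤ) (p : K[X]) : IsUnit (pShift K i p) ↔ IsUnit p :=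
  isUnit_map_iff (pShift K i) p

lemma rShift_algebraMap (i : ℤ) (p : K[X]) :
    rShift K i (algebraMap K[X] (RatFunc K) p) = algebraMap K[X] (RatFunc K) (pShift K i p) :=
  IsFractionRing.ringEquivOfRingEquiv_algebraMap _ p

end Shift

lemma sum_mul_prod_erase_eq_of_sum_mul_div_eq {F ι : Type*} [Field F] [DecidableEq ι]
    {s : Finset ι} {a P Q : ι → F} {f : F} (hQ : ∀ i ∈ s, Q i ≠ 0)
    (h : ∑ i ∈ s, a i * (P i / Q i) = f) :
    ∑ i ∈ s, a i * P i * ∏ k ∈ s.erase i, Q k = f * ∏ k ∈ s, Q k := by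
  rw [← h, Finset.sum_mul]
  refine Finset.sum_congr rfl fun i hi => ?_
  rw [← Finset.mul_prod_erase s Q hi]
  field_simp [hQ i hi]

lemma Prime.dvd_of_sum_mul_prod_erase_eq {R ι : Type*} [CommRing R] [DecidableEq ι]
    {s : Finset ι} {a P Q : ι → R} {f w : R} (hw : Prime w)
    (h : ∑ i ∈ s, a i * P i * ∏ k ∈ s.erase i, Q k = f * ∏ k ∈ s, Q k) {i₀ : ι} (hi₀ : i₀ ∈ s)
    (hwQ : w ∣ Q i₀) (hwP : ¬ w ∣ P i₀) (hwQk : ∀ k ∈ s, k ≠ i₀ → ¬ w ∣ Q k) : w ∣ a i₀ := by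
  have hQ : ∀ i ∈ s, i ≠ i₀ → w ∣ ∏ k ∈ s.erase i, Q k := fun i hi hne =>
    hwQ.trans (Finset.dvd_prod_of_mem Q (Finset.mem_erase.2 ⟨Ne.symm hne, hi₀⟩))
  have hrest : w ∣ ∑ i ∈ s.erase i₀, a i * P i * ∏ k ∈ s.erase i, Q k :=
    Finset.dvd_sum fun i hi =>
      (hQ i (Finset.mem_of_mem_erase hi) (Finset.ne_of_mem_erase hi)).mul_left _
  have hall : w ∣ ∑ i ∈ s, a i * P i * ∏ k ∈ s.erase i, Q k :=
    h ▸ (hwQ.trans (Finset.dvd_prod_of_mem Q hi₀)).mul_left f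
  rw [← Finset.add_sum_erase s _ hi₀] at hall
  have hterm := (dvd_add_left hrest).1 hall
  rcases hw.dvd_mul.1 hterm with haP | hprod
  · exact (hw.dvd_mul.1 haP).resolve_right hwP
  · obtain ⟨k, hk, hwk⟩ := (hw.dvd_finsetProd_iff Q).1 hprod
    exact absurd hwk (hwQk k (Finset.mem_of_mem_erase hk) (Finset.ne_of_mem_erase hk))

section Dispersion

variable {K : Type*} [Field K]

open Polynomial in
lemma finite_setOf_pShift_dvd [CharZero K] {u q : K[X]} (hu : u.degree ≠ 0) (hq : q ≠ 0) :
    {t : ℤ | pShift K t u ∣ q}.Finite := by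
  obtain ⟨α, hα⟩ := IsAlgClosed.exists_root (u.map (algebraMap K (AlgebraicClosure K)))
    (by rwa [degree_map])
  -- `α - t` is a root of `N^t u`, hence of `q`, and these roots are pairwise distinct
  have hroot : ∀ t : ℤ, pShift K t u ∣ q → α - t ∈ (q.map (algebraMap K _)).roots := by
    intro t ht
    obtain ⟨r, hr⟩ := Polynomial.map_dvd (algebraMap K (AlgebraicClosure K)) ht
    rw [mem_roots (map_ne_zero hq), IsRoot, hr, eval_mul, pShift_apply, map_comp, eval_comp]
    simp [hα.eq_zero]
  refine Set.Finite.subset (Set.Finite.preimage ?_ (q.map (algebraMap K _)).roots.finite_toSet)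
    fun t ht => hroot t ht
  intro x _ z _ hxz
  exact_mod_cast sub_right_injective hxz

lemma exists_irreducible_maximal_shift_chain [CharZero K] {q u : K[X]} (hq : q ≠ 0)
    (hu : Irreducible u) (hu0 : u ∣ q) {j : ℕ} (huj : pShift K j u ∣ q) :
    ∃ w, Irreducible w ∧ ∃ d : ℕ, j ≤ d ∧ w ∣ q ∧ pShift K d w ∣ q ∧
      ∀ t : ℤ, pShift K t w ∣ q → 0 ≤ t ∧ t ≤ d := by
  have hS := finite_setOf_pShift_dvd (Polynomial.degree_pos_of_irreducible hu).ne' hq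
  have h0S : (0 : ℤ) ∈ {t : ℤ | pShift K t u ∣ q} := by simpa using hu0
  obtain ⟨l, hlS, hl⟩ := Set.exists_min_image _ id hS ⟨0, h0S⟩
  obtain ⟨h, hhS, hh⟩ := Set.exists_max_image _ id hS ⟨0, h0S⟩
  have hl0 : l ≤ 0 := hl 0 h0S
  have hjh : (j : ℤ) ≤ h := hh j huj
  refine ⟨pShift K l u, (irreducible_pShift_iff l u).2 hu, (h - l).toNat, by omega, hlS, ?_,
    fun t ht => ?_⟩
  · rwa [pShift_pShift, Int.toNat_of_nonneg (by omega), sub_add_cancel]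
  · rw [pShift_pShift] at ht
    have hlt : l ≤ t + l := hl _ ht
    have hth : t + l ≤ h := hh _ ht
    omega

variable {m : ℕ} {a : ℕ → K[X]} {f : K[X]} {y : RatFunc K}

lemma sum_coeff_mul_pShift_num_mul_prod_erase_eq
    (heq : ∑ i ∈ Finset.range (m + 1), algebraMap K[X] (RatFunc K) (a i) * rShift K i y
      = algebraMap K[X] (RatFunc K) f) :
    ∑ i ∈ Finset.range (m + 1),
        a i * pShift K i y.num * ∏ k ∈ (Finset.range (m + 1)).erase i, pShift K k y.denom
      = f * ∏ k ∈ Finset.range (m + 1), pShift K k y.denom := by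
  apply IsFractionRing.injective K[X] (RatFunc K)
  simp only [map_sum, map_mul, map_prod]
  refine sum_mul_prod_erase_eq_of_sum_mul_div_eq (fun i _ => by simp [y.denom_ne_zero]) ?_
  rw [← heq]
  refine Finset.sum_congr rfl fun i _ => ?_
  rw [← rShift_algebraMap, ← rShift_algebraMap, ← map_div₀, y.num_div_denom]

lemma pShift_dvd_coeff_of_isolated
    (heq : ∑ i ∈ Finset.range (m + 1), algebraMap K[X] (RatFunc K) (a i) * rShift K i y
      = algebraMap K[X] (RatFunc K) f)
    {w : K[X]} (hw : Irreducible w) (hwq : w ∣ y.denom) {i₀ : ℕ} (hi₀ : i₀ ≤ m)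
    (hiso : ∀ k ≤ m, k ≠ i₀ → ¬ pShift K ((i₀ : ℤ) - k) w ∣ y.denom) :
    pShift K i₀ w ∣ a i₀ := by
  have hw' : Prime (pShift K i₀ w) := ((irreducible_pShift_iff _ w).2 hw).prime
  refine hw'.dvd_of_sum_mul_prod_erase_eq (P := fun i : ℕ => pShift K i y.num)
    (Q := fun i : ℕ => pShift K i y.denom) (sum_coeff_mul_pShift_num_mul_prod_erase_eq heq)
    (Finset.mem_range.2 (Nat.lt_succ_of_le hi₀)) (map_dvd _ hwq) (fun hwp => ?_)
    (fun k hk hne h => ?_)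
  · exact hw.not_isUnit (y.isCoprime_num_denom.isUnit_of_dvd' ((map_dvd_iff _).1 hwp) hwq)
  · exact hiso k (Nat.le_of_lt_succ (Finset.mem_range.1 hk)) hne
      ((pShift_dvd_pShift_iff _ _ _ _).1 h)

end Dispersion

theorem denominator_dispersion_le_dispersion_of_coeffs_general
    {K : Type*} [Field K] [CharZero K]
    (m : ℕ) (a : ℕ → Polynomial K) (f : Polynomial K)
    (y : RatFunc K)
    (heq : ∑ i ∈ Finset.range (m + 1),
        algebraMap (Polynomial K) (RatFunc K) (a i) * rShift K i y
      = algebraMap (Polynomial K) (RatFunc K) f) :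
    (⨆ i ∈ {i : ℕ | ¬ IsRelPrime y.denom (pShift K i y.denom)}, ((i : ℕ∞) : WithBot ℕ∞))
      ≤ ⨆ i ∈ {i : ℕ | ¬ IsRelPrime (pShift K i (a 0)) (pShift K (-(m : ℤ)) (a m))},
          ((i : ℕ∞) : WithBot ℕ∞) := by
  refine iSup₂_le fun j hj => ?_
  obtain ⟨v, hv, hvq, hvjq⟩ : ∃ v, Irreducible v ∧ v ∣ y.denom ∧ v ∣ pShift K j y.denom := by
    by_contra! h
    exact hj (WfDvdMonoid.isRelPrime_of_no_irreducible_factors (y.denom_ne_zero ·.1) h)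
  obtain ⟨w, hw, d, hjd, hwq, hwdq, hchain⟩ := exists_irreducible_maximal_shift_chain
    y.denom_ne_zero ((irreducible_pShift_iff (-j) v).2 hv)
    (by simpa using (pShift_dvd_pShift_iff 0 j v _).1 (by simpa using hvjq))
    (by rwa [pShift_pShift, add_neg_cancel, pShift_zero])
  have hw0 : w ∣ a 0 := by
    simpa using pShift_dvd_coeff_of_isolated heq hw hwq m.zero_le
      fun k _ hk h => by have := (hchain _ h).1; omega
  have hwm : pShift K (m + d) w ∣ a m := by
    simpa [pShift_pShift] using pShift_dvd_coeff_of_isolated heq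
      ((irreducible_pShift_iff d w).2 hw) hwdq le_rfl
      fun k _ hne h => by rw [pShift_pShift] at h; have := (hchain _ h).2; omega
  have hwm' : pShift K d w ∣ pShift K (-m) (a m) := by
    rwa [pShift_dvd_pShift_iff, sub_neg_eq_add, add_comm]
  refine le_iSup₂_of_le d (fun hrel => ?_) (by exact_mod_cast hjd)
  exact hw.not_isUnit ((isUnit_pShift_iff d w).1 (hrel (map_dvd _ hw0) hwm'))

/-- **Abramov's dispersion bound (Theorem 1).**
Let `y = p/q ∈ K(n)` (in lowest terms, so `q = y.denom` is the canonical denominator)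
be any solution of `a₀ y + a₁ N y + ⋯ + a_m N^m y = f`.  Then
`max { i ∈ ℕ : gcd(q, N^i q) ≠ 1 } ≤ max { i ∈ ℕ : gcd(N^i a₀, N^{-m} a_m) ≠ 1 }`,
where the maxima (with the convention `max ∅ = -∞`) are taken in `WithBot ℕ∞`
and `gcd(u,v) ≠ 1` is expressed as `¬ IsRelPrime u v`. -/
theorem denominator_dispersion_le_dispersion_of_coeffs
    {K : Type*} [Field K] [CharZero K]
    (m : ℕ) (a : ℕ → Polynomial K) (f : Polynomial K)
    (ha0 : a 0 ≠ 0) (ham : a m ≠ 0)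
    (y : RatFunc K)
    (heq : ∑ i ∈ Finset.range (m + 1),
        algebraMap (Polynomial K) (RatFunc K) (a i) * rShift K i y
      = algebraMap (Polynomial K) (RatFunc K) f) :
    (⨆ i ∈ {i : ℕ | ¬ IsRelPrime y.denom (pShift K i y.denom)}, ((i : ℕ∞) : WithBot ℕ∞))
      ≤ ⨆ i ∈ {i : ℕ | ¬ IsRelPrime (pShift K i (a 0)) (pShift K (-(m : ℤ)) (a m))},
          ((i : ℕ∞) : WithBot ℕ∞) :=
  denominator_dispersion_le_dispersion_of_coeffs_general m a f y heq
end

section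
/- Let p, q ∈ K[n_1,…,n_r] be irreducible and aperiodic. Then Spread(p,q) has at most one element. -/
open MvPolynomial

/-- The substitution homomorphism `n_j ↦ n_j + i_j` on `K[n₁,…,n_r]`. -/
noncomputable def mShiftHom (K : Type*) [Field K] {r : ℕ} (i : Fin r → ℤ) :
    MvPolynomial (Fin r) K →ₐ[K] MvPolynomial (Fin r) K :=
  aeval (fun j => X j + C (i j : K))

/-- The shift automorphism `N^i` of `K[n₁,…,n_r]`, determined by `n_j ↦ n_j + i_j`. -/
noncomputable def mShift (K : Type*) [Field K] {r : ℕ} (i : Fin r → ℤ) :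
    MvPolynomial (Fin r) K ≃ₐ[K] MvPolynomial (Fin r) K :=
  AlgEquiv.ofAlgHom (mShiftHom K i) (mShiftHom K (-i))
    (by apply MvPolynomial.algHom_ext; intro j; simp [mShiftHom])
    (by apply MvPolynomial.algHom_ext; intro j; simp [mShiftHom])

/-- `Spread(p,q) = { i ∈ ℤ^r : gcd(p, N^i q) ≠ 1 }`, where `gcd ≠ 1` (not a unit)
is expressed as `¬ IsRelPrime`. -/
def mSpread {K : Type*} [Field K] {r : ℕ} (p q : MvPolynomial (Fin r) K) :
    Set (Fin r → ℤ) :=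
  {i | ¬ IsRelPrime p (mShift K i q)}

/-!
If `i` and `j` both lie in `Spread(p,q)`, then irreducibility forces `p` to be associate to both
`N^i q` and `N^j q`, so `q` is associate to `N^(j-i) q` and hence to every `N^(k(j-i)) q`.
A non-unit has a non-unit gcd with each of its associates, so all multiples of
`j - i` lie in `Spread(q,q)`, which is finite by aperiodicity; hence `i = j`.
-/

section

variable {K : Type*} [Field K] {r : ℕ}

lemma mShift_add (i j : Fin r → ℤ) (f : MvPolynomial (Fin r) K) :
    mShift K (i + j) f = mShift K i (mShift K j f) := by
  have : mShiftHom K (i + j) = (mShiftHom K i).comp (mShiftHom K j) := by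
    apply MvPolynomial.algHom_ext
    intro k
    simp only [mShiftHom, AlgHom.comp_apply, aeval_X, map_add, algHom_C, algebraMap_eq,
      Pi.add_apply, Int.cast_add]
    ring
  exact congrArg (· f) this

lemma mShift_zero (f : MvPolynomial (Fin r) K) : mShift K (0 : Fin r → ℤ) f = f := by
  have : mShiftHom K (0 : Fin r → ℤ) = AlgHom.id K _ := by
    apply MvPolynomial.algHom_ext
    intro k
    simp [mShiftHom]
  exact congrArg (· f) this

lemma associated_mShift_iff (i : Fin r → ℤ) {f g : MvPolynomial (Fin r) K} :
    Associated (mShift K i f) (mShift K i g) ↔ Associated f g := by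
  refine ⟨fun h => ?_, (·.map (mShift K i))⟩
  simpa only [← mShift_add, neg_add_cancel, mShift_zero] using h.map (mShift K (-i))

lemma associated_mShift_sub_of_associated {i j : Fin r → ℤ} {q : MvPolynomial (Fin r) K}
    (h : Associated (mShift K i q) (mShift K j q)) : Associated q (mShift K (j - i) q) := by
  rwa [← associated_mShift_iff i, ← mShift_add, add_sub_cancel]

lemma associated_mShift_nsmul {d : Fin r → ℤ} {q : MvPolynomial (Fin r) K}
    (h : Associated q (mShift K d q)) (k : ℕ) : Associated q (mShift K (k • d) q) := by
  induction k with
  | zero => rw [zero_smul, mShift_zero]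
  | succ k ih =>
    rw [succ_nsmul, mShift_add]
    exact ih.trans ((associated_mShift_iff (k • d)).mpr h)

lemma mem_mSpread_self_of_associated {d : Fin r → ℤ} {q : MvPolynomial (Fin r) K}
    (hq : ¬IsUnit q) (h : Associated q (mShift K d q)) : d ∈ mSpread q q :=
  fun hrel => hq (hrel dvd_rfl h.dvd)

lemma mSpread_self_infinite_of_associated_mShift {d : Fin r → ℤ} {q : MvPolynomial (Fin r) K}
    (hq : ¬IsUnit q) (hd : d ≠ 0) (h : Associated q (mShift K d q)) :
    (mSpread q q).Infinite := by
  have hinj : Function.Injective fun k : ℕ => k • d := by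
    intro a b hab
    simp only [← natCast_zsmul] at hab
    exact_mod_cast smul_left_injective ℤ hd hab
  refine (Set.infinite_range_of_injective hinj).mono ?_
  rintro _ ⟨k, rfl⟩
  exact mem_mSpread_self_of_associated hq (associated_mShift_nsmul h k)

lemma associated_mShift_of_mem_mSpread {i : Fin r → ℤ} {p q : MvPolynomial (Fin r) K}
    (hp : Irreducible p) (hq : Irreducible q) (hi : i ∈ mSpread p q) :
    Associated p (mShift K i q) := by
  have hdvd : p ∣ mShift K i q := not_not.mp (mt hp.isRelPrime_iff_not_dvd.mpr hi)
  exact hp.associated_of_dvd ((MulEquiv.irreducible_iff (mShift K i)).mpr hq) hdvd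

end

theorem spread_subsingleton_of_irreducible_aperiodic_general
    {K : Type*} [Field K] {r : ℕ}
    (p q : MvPolynomial (Fin r) K)
    (hp : Irreducible p) (hq : Irreducible q)
    (hqa : (mSpread q q).Finite) :
    (mSpread p q).Subsingleton := by
  intro i hi j hj
  by_contra hij
  have hshift : Associated q (mShift K (j - i) q) :=
    associated_mShift_sub_of_associated <|
      (associated_mShift_of_mem_mSpread hp hq hi).symm.trans
        (associated_mShift_of_mem_mSpread hp hq hj)
  exact mSpread_self_infinite_of_associated_mShift hq.not_isUnit
    (sub_ne_zero.mpr (Ne.symm hij)) hshift hqa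

/-- A polynomial `p` is *periodic* if `Spread(p,p)` is infinite, and *aperiodic*
otherwise.  **Lemma:** if `p, q ∈ K[n₁,…,n_r]` are irreducible and aperiodic, then
`Spread(p,q)` has at most one element. -/
theorem spread_subsingleton_of_irreducible_aperiodic
    {K : Type*} [Field K] [CharZero K] {r : ℕ}
    (p q : MvPolynomial (Fin r) K)
    (hp : Irreducible p) (hq : Irreducible q)
    (hpa : (mSpread p p).Finite) (hqa : (mSpread q q).Finite) :
    (mSpread p q).Subsingleton :=
  spread_subsingleton_of_irreducible_aperiodic_general p q hp hq hqa
end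

section
/- Let S ⊆ ℤ^r be finite and nonempty, a_s ∈ K[n]\{0} for s ∈ S, f ∈ K[n], and let p_1,…,p_k ∈ S be corner points of S. If y ∈ K(n) is a solution of the PLDE ∑_{s∈S} a_s N^s y = f whose denominator (in lowest terms) is divisible by an aperiodic irreducible polynomial h ∈ K[n], then for each j ∈ {1,…,k} there exists i ∈ ℤ^r such that N^i h divides a_{p_j}; that is, a factor shift equivalent to h occurs in each of the coefficients a_{p_1},…,a_{p_k}. -/
open MvPolynomial

/-- The canonical embedding of `K[n₁,…,n_r]` into its fraction field `K(n₁,…,n_r)`. -/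
noncomputable def toFrac (K : Type*) [Field K] {r : ℕ} :
    MvPolynomial (Fin r) K →+* FractionRing (MvPolynomial (Fin r) K) :=
  algebraMap _ _

/-- The shift automorphism `N^i` extended to the fraction field `K(n₁,…,n_r)`. -/
noncomputable def fShift (K : Type*) [Field K] {r : ℕ} (i : Fin r → ℤ) :
    FractionRing (MvPolynomial (Fin r) K) ≃+* FractionRing (MvPolynomial (Fin r) K) :=
  IsFractionRing.ringEquivOfRingEquiv (mShift K i).toRingEquiv

/-!
Let `T` be the set of shifts `i` with `N^i h ∣ den`; it is finite because `h` is aperiodic. For the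
vector `v` exposing the corner `p`, pick `i₀ ∈ T` minimizing `⟨v, ·⟩`. Clearing denominators gives
`∑_t a_t N^t pnum ∏_{s ≠ t} N^s den = f ∏_s N^s den`. The prime `q = N^{p+i₀} h` divides `N^p den`,
and by minimality of `i₀` no other `N^t den`, so `q` divides `a_p N^p pnum`. As `pnum / den` is
reduced, `q ∤ N^p pnum`, hence `q ∣ a_p`.
-/

section Shift

variable {K : Type*} [Field K] {r : ℕ}

@[simp]
lemma mShift_mShift (i j : Fin r → ℤ) (x : MvPolynomial (Fin r) K) :
    mShift K i (mShift K j x) = mShift K (i + j) x := by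
  have : (mShift K i).toAlgHom.comp (mShift K j).toAlgHom = (mShift K (i + j)).toAlgHom := by
    refine MvPolynomial.algHom_ext fun l => ?_
    simp [mShift, mShiftHom]
    ring
  exact DFunLike.congr_fun this x

@[simp]
lemma mShift_zero_apply (x : MvPolynomial (Fin r) K) : mShift K 0 x = x := by
  have : (mShift K (0 : Fin r → ℤ)).toAlgHom = AlgHom.id K _ :=
    MvPolynomial.algHom_ext fun l => by simp [mShift, mShiftHom]
  exact DFunLike.congr_fun this x

lemma mShift_dvd_mShift_iff {i j : Fin r → ℤ} {x y : MvPolynomial (Fin r) K} :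
    mShift K i x ∣ mShift K j y ↔ mShift K (-j + i) x ∣ y := by
  conv_rhs => rw [← map_dvd_iff (mShift K j)]
  rw [mShift_mShift, add_neg_cancel_left]

lemma irreducible_mShift {h : MvPolynomial (Fin r) K} (hh : Irreducible h) (i : Fin r → ℤ) :
    Irreducible (mShift K i h) :=
  (MulEquiv.irreducible_iff (mShift K i).toMulEquiv).mpr hh

lemma fShift_toFrac (i : Fin r → ℤ) (g : MvPolynomial (Fin r) K) :
    fShift K i (toFrac K g) = toFrac K (mShift K i g) :=
  IsFractionRing.ringEquivOfRingEquiv_algebraMap (mShift K i).toRingEquiv g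

/-- For aperiodic irreducible `h`, two shifts `N^i h`, `N^j h` are associated only when `i - j`
lies in the finite set `Spread(h, h)`, so each irreducible factor of `den` absorbs finitely many
shifts of `h`. -/
lemma finite_setOf_mShift_dvd {h den : MvPolynomial (Fin r) K} (hh : Irreducible h)
    (haper : (mSpread h h).Finite) (hden : den ≠ 0) :
    {i | mShift K i h ∣ den}.Finite := by
  classical
  let F := (UniqueFactorizationMonoid.factors den).toFinset
  have hcover : {i | mShift K i h ∣ den} ⊆ ⋃ g ∈ F, {i | Associated (mShift K i h) g} := by
    intro i hi
    obtain ⟨g, hg, hassoc⟩ :=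
      UniqueFactorizationMonoid.exists_mem_factors_of_dvd hden (irreducible_mShift hh i) hi
    exact Set.mem_biUnion (Multiset.mem_toFinset.mpr hg) hassoc
  refine (F.finite_toSet.biUnion fun g _ => ?_).subset hcover
  rcases Set.eq_empty_or_nonempty {i | Associated (mShift K i h) g} with hempty | ⟨i₀, hi₀⟩
  · simp [hempty]
  refine (haper.image (i₀ + ·)).subset fun i hi => ⟨-i₀ + i, fun hrel => ?_, by simp⟩
  have hassoc : Associated (mShift K (-i₀ + i) h) h := by
    simpa using
      (Associated.trans hi hi₀.symm).map (mShift K (-i₀)).toMulEquiv.toMonoidHom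
  exact hh.not_isUnit (hrel dvd_rfl hassoc.symm.dvd)

end Shift

lemma Finset.sum_mul_div_mul_prod {ι F : Type*} [Field F] [DecidableEq ι] {S : Finset ι}
    {α x d : ι → F} (hd : ∀ t ∈ S, d t ≠ 0) :
    (∑ t ∈ S, α t * (x t / d t)) * ∏ t ∈ S, d t = ∑ t ∈ S, α t * x t * ∏ s ∈ S.erase t, d s := by
  rw [Finset.sum_mul]
  refine Finset.sum_congr rfl fun t ht => ?_
  rw [← Finset.mul_prod_erase S d ht]
  field_simp [hd t ht]

lemma Prime.dvd_of_sum_mul_prod_erase_eq_s12 {ι R : Type*} [CommRing R] [DecidableEq ι]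
    {q g : R} (hq : Prime q) {S : Finset ι} {p : ι} (hp : p ∈ S) {b c : ι → R}
    (hsum : ∑ t ∈ S, b t * ∏ s ∈ S.erase t, c s = g * ∏ s ∈ S, c s)
    (hqp : q ∣ c p) (hqt : ∀ t ∈ S, t ≠ p → ¬ q ∣ c t) : q ∣ b p := by
  have hother : q ∣ ∑ t ∈ S.erase p, b t * ∏ s ∈ S.erase t, c s :=
    Finset.dvd_sum fun t ht => Dvd.dvd.mul_left (hqp.trans (Finset.dvd_prod_of_mem c
      (Finset.mem_erase.mpr ⟨(Finset.ne_of_mem_erase ht).symm, hp⟩))) _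
  have hall : q ∣ ∑ t ∈ S, b t * ∏ s ∈ S.erase t, c s :=
    hsum ▸ (hqp.trans (Finset.dvd_prod_of_mem c hp)).mul_left g
  rw [← Finset.add_sum_erase S _ hp] at hall
  have hpterm : q ∣ b p * ∏ s ∈ S.erase p, c s := (dvd_add_left hother).mp hall
  refine (hq.dvd_or_dvd hpterm).resolve_right fun hprod => ?_
  obtain ⟨t, ht, hqt'⟩ := hq.exists_mem_finset_dvd hprod
  exact hqt t (Finset.mem_of_mem_erase ht) (Finset.ne_of_mem_erase ht) hqt'

/-- The witness `i₀` is a point of `T` minimizing `i ↦ ⟨v, i⟩`. -/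
lemma exists_mem_forall_add_eq_corner {r : ℕ} {S : Finset (Fin r → ℤ)} {T : Set (Fin r → ℤ)}
    (hT : T.Finite) (hTne : T.Nonempty) {p : Fin r → ℤ} {v : Fin r → ℝ}
    (hv : ∀ t ∈ S, t ≠ p → 0 < ∑ l, v l * ((t l - p l : ℤ) : ℝ)) :
    ∃ i₀ ∈ T, ∀ t ∈ S, ∀ i ∈ T, t + i = p + i₀ → t = p := by
  obtain ⟨i₀, hi₀, hmin⟩ := hT.exists_minimalFor (fun i => ∑ l, v l * (i l : ℝ)) T hTne
  refine ⟨i₀, hi₀, fun t ht i hi hti => by_contra fun htp => ?_⟩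
  have hi_eq : i = p + i₀ - t := by rw [← hti]; abel
  have hlt : ∑ l, v l * (i l : ℝ) < ∑ l, v l * (i₀ l : ℝ) := by
    have := hv t ht htp
    simp only [hi_eq, Pi.sub_apply, Pi.add_apply, Int.cast_sub, Int.cast_add] at this ⊢
    simp only [mul_sub, mul_add, Finset.sum_sub_distrib, Finset.sum_add_distrib] at this ⊢
    linarith
  linarith [hmin hi hlt.le]

lemma sum_mul_mShift_mul_prod_erase_eq {K : Type*} [Field K] {r : ℕ} (S : Finset (Fin r → ℤ))
    (a : (Fin r → ℤ) → MvPolynomial (Fin r) K) (f pnum den : MvPolynomial (Fin r) K)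
    (hden : den ≠ 0)
    (hsol : ∑ t ∈ S, toFrac K (a t) * fShift K t (toFrac K pnum / toFrac K den) = toFrac K f) :
    ∑ t ∈ S, a t * mShift K t pnum * ∏ s ∈ S.erase t, mShift K s den =
      f * ∏ s ∈ S, mShift K s den := by
  have hinj : Function.Injective (toFrac K (r := r)) := IsFractionRing.injective _ _
  refine hinj ?_
  have hden' : ∀ t ∈ S, toFrac K (mShift K t den) ≠ 0 := fun t _ =>
    (map_ne_zero_iff _ hinj).mpr ((map_ne_zero_iff _ (mShift K t).injective).mpr hden)
  simp only [map_div₀, fShift_toFrac] at hsol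
  simp only [map_sum, map_mul, map_prod, ← hsol, Finset.sum_mul_div_mul_prod hden']

theorem shift_equivalent_factor_at_corner_points_general
    {K : Type*} [Field K] {r k : ℕ}
    (S : Finset (Fin r → ℤ))
    (a : (Fin r → ℤ) → MvPolynomial (Fin r) K)
    (f : MvPolynomial (Fin r) K)
    (P : Fin k → (Fin r → ℤ)) (hP : ∀ j, P j ∈ S)
    (hcorner : ∀ j, ∃ v : Fin r → ℝ, v ≠ 0 ∧
      ∀ t ∈ S, t ≠ P j → 0 < ∑ l, v l * ((t l - P j l : ℤ) : ℝ))
    (y : FractionRing (MvPolynomial (Fin r) K))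
    (hsol : ∑ t ∈ S, toFrac K (a t) * fShift K t y = toFrac K f)
    (pnum den : MvPolynomial (Fin r) K)
    (hden0 : den ≠ 0)
    (hy : y = toFrac K pnum / toFrac K den)
    (hlow : IsRelPrime pnum den)
    (h : MvPolynomial (Fin r) K)
    (hirr : Irreducible h) (haper : (mSpread h h).Finite) (hdvd : h ∣ den) :
    ∀ j, ∃ i : Fin r → ℤ, mShift K i h ∣ a (P j) := by
  intro j
  obtain ⟨v, -, hv⟩ := hcorner j
  obtain ⟨i₀, hi₀, hcorner₀⟩ := exists_mem_forall_add_eq_corner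
    (finite_setOf_mShift_dvd hirr haper hden0) ⟨0, by simpa using hdvd⟩ hv
  have hq : Prime (mShift K (P j + i₀) h) := (irreducible_mShift hirr _).prime
  have hclear := sum_mul_mShift_mul_prod_erase_eq S a f pnum den hden0 (hy ▸ hsol)
  have hq_dvd : mShift K (P j + i₀) h ∣ a (P j) * mShift K (P j) pnum :=
    hq.dvd_of_sum_mul_prod_erase_eq_s12 (hP j) (b := fun t => a t * mShift K t pnum) hclear
      (mShift_dvd_mShift_iff.mpr (by simpa using hi₀))
      fun t ht htp hdvd' => htp (hcorner₀ t ht _ (mShift_dvd_mShift_iff.mp hdvd') (by abel))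
  refine ⟨P j + i₀, (hq.dvd_or_dvd hq_dvd).resolve_right fun hnum => ?_⟩
  have hnum' : mShift K i₀ h ∣ pnum := by simpa using mShift_dvd_mShift_iff.mp hnum
  exact (irreducible_mShift hirr i₀).not_isUnit (hlow hnum' hi₀)

/-- **Theorem (factors at corner points).**
Let `p₁,…,p_k ∈ S` be corner points of `S`.  If `y ∈ K(n)` is a solution of the PLDE
`∑_{t ∈ S} a_t N^t y = f` whose denominator (in lowest terms) is divisible by an
aperiodic irreducible polynomial `h`, then for each `j` some shift `N^i h` of `h`
divides `a_{p_j}`: a factor shift equivalent to `h` occurs in each of the coefficients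
`a_{p₁},…,a_{p_k}`. -/
theorem shift_equivalent_factor_at_corner_points
    {K : Type*} [Field K] [CharZero K] {r k : ℕ}
    (S : Finset (Fin r → ℤ)) (hS : S.Nonempty)
    (a : (Fin r → ℤ) → MvPolynomial (Fin r) K) (ha : ∀ t ∈ S, a t ≠ 0)
    (f : MvPolynomial (Fin r) K)
    (P : Fin k → (Fin r → ℤ)) (hP : ∀ j, P j ∈ S)
    (hcorner : ∀ j, ∃ v : Fin r → ℝ, v ≠ 0 ∧
      ∀ t ∈ S, t ≠ P j → 0 < ∑ l, v l * ((t l - P j l : ℤ) : ℝ))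
    (y : FractionRing (MvPolynomial (Fin r) K))
    (hsol : ∑ t ∈ S, toFrac K (a t) * fShift K t y = toFrac K f)
    (pnum den : MvPolynomial (Fin r) K)
    (hden0 : den ≠ 0)
    (hy : y = toFrac K pnum / toFrac K den)
    (hlow : IsRelPrime pnum den)
    (h : MvPolynomial (Fin r) K)
    (hirr : Irreducible h) (haper : (mSpread h h).Finite) (hdvd : h ∣ den) :
    ∀ j, ∃ i : Fin r → ℤ, mShift K i h ∣ a (P j) :=
  shift_equivalent_factor_at_corner_points_general S a f P hP hcorner y hsol pnum den hden0 hy hlow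
    h hirr haper hdvd
end
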